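/- Let R > 0 and k ∈ ℕ₀ and fix either sign ±. There exist constants c, C > 0, depending only on R and k, such that for all f ∈ C^∞([−R,R]): c ‖f‖_{H^k(𝔹_R)} ≤ ∑_{j=0}^{k} ‖D_±^j f‖_{L²(𝔹_R, h_±')} ≤ C ‖f‖_{H^k(𝔹_R)}. -/

import Mathlib

open Real MeasureTheory

/-- The height function `h(y) = √(2 + y²) − 2`. -/
noncomputable def hfun (y : ℝ) : ℝ := Real.sqrt (2 + y ^ 2) - 2

/-- The vector field `D_± f(y) = f'(y)/(1 ± h'(y))`; the sign is encoded by `σ ∈ {1, −1}`. -/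
noncomputable def Dop (σ : ℝ) (f : ℝ → ℝ) : ℝ → ℝ :=
  fun y => deriv f y / (1 + σ * deriv hfun y)

/-- The Sobolev norm `‖f‖_{H^k(𝔹_R)} = ∑_{j=0}^k ‖f^{(j)}‖_{L²(−R,R)}`. -/
noncomputable def sob1 (R : ℝ) (k : ℕ) (f : ℝ → ℝ) : ℝ :=
  ∑ j ∈ Finset.range (k + 1),
    Real.sqrt (∫ x in Set.Ioo (-R) R, (iteratedDeriv j f x) ^ 2)

/-- The weighted `L²(𝔹_R, h_±')` norm. -/
noncomputable def wL2 (R σ : ℝ) (f : ℝ → ℝ) : ℝ :=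
  Real.sqrt (∫ y in Set.Ioo (-R) R, (f y) ^ 2 * (1 + σ * deriv hfun y))

/-!
Write `w = 1 ± h'`, so that `D_± = w⁻¹ d/dy`. Since `|h'| < 1`, `w` is smooth and positive.
An induction shows that `D_±^j f` is a combination of `f, f', …, f⁽ʲ⁾`, and conversely `f⁽ʲ⁾`
one of `f, D_± f, …, D_±^j f`, with smooth coefficients that do not depend on `f`. On the
compact interval `[-R, R]` these coefficients and `w⁻¹` are bounded, so a weighted
Cauchy–Schwarz inequality bounds each integrand pointwise by the other side's integrands;
integrating and taking square roots gives both inequalities.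
-/

open Finset Set
open scoped ContDiff

theorem sqrt_sum_le_sum_sqrt {ι : Type*} (s : Finset ι) {x : ι → ℝ} (hx : ∀ i ∈ s, 0 ≤ x i) :
    √(∑ i ∈ s, x i) ≤ ∑ i ∈ s, √(x i) := by
  rw [Real.sqrt_le_left (sum_nonneg fun i _ => Real.sqrt_nonneg _)]
  calc ∑ i ∈ s, x i = ∑ i ∈ s, √(x i) ^ 2 :=
        sum_congr rfl fun i hi => (Real.sq_sqrt (hx i hi)).symm
    _ ≤ _ := sum_sq_le_sq_sum_of_nonneg fun i _ => Real.sqrt_nonneg _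

theorem sq_sum_mul_le_sum_div_mul_sum {ι : Type*} (s : Finset ι) (c u : ι → ℝ) {ρ τ : ℝ}
    (hρ : 0 ≤ ρ) (hτ : 0 < τ) :
    (∑ i ∈ s, c i * u i) ^ 2 * ρ ≤ (∑ i ∈ s, c i ^ 2 / τ) * ρ * ∑ i ∈ s, u i ^ 2 * τ := by
  have hcs : (∑ i ∈ s, c i * u i) ^ 2 ≤ (∑ i ∈ s, c i ^ 2 / τ) * ∑ i ∈ s, u i ^ 2 * τ :=
    sum_sq_le_sum_mul_sum_of_sq_le_mul s (fun i _ => by positivity) (fun i _ => by positivity)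
      fun i _ => by field_simp; rfl
  calc (∑ i ∈ s, c i * u i) ^ 2 * ρ
      ≤ (∑ i ∈ s, c i ^ 2 / τ) * (∑ i ∈ s, u i ^ 2 * τ) * ρ := by gcongr
    _ = _ := by ring

theorem sqrt_setIntegral_le_sqrt_mul_sum_sqrt {α ι : Type*} [MeasurableSpace α] {μ : Measure α}
    {S : Set α} (hS : MeasurableSet S) (t : Finset ι) {F : α → ℝ} {G : ι → α → ℝ} {M : ℝ}
    (hM : 0 ≤ M) (hF : IntegrableOn F S μ) (hG : ∀ i ∈ t, IntegrableOn (G i) S μ)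
    (hG0 : ∀ i ∈ t, ∀ x ∈ S, 0 ≤ G i x) (h : ∀ x ∈ S, F x ≤ M * ∑ i ∈ t, G i x) :
    √(∫ x in S, F x ∂μ) ≤ √M * ∑ i ∈ t, √(∫ x in S, G i x ∂μ) := by
  have hint : ∫ x in S, F x ∂μ ≤ M * ∑ i ∈ t, ∫ x in S, G i x ∂μ := by
    rw [← integral_finsetSum t hG, ← integral_const_mul]
    exact setIntegral_mono_on hF ((integrable_finsetSum t hG).const_mul M) hS h
  calc √(∫ x in S, F x ∂μ) ≤ √(M * ∑ i ∈ t, ∫ x in S, G i x ∂μ) := Real.sqrt_le_sqrt hint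
    _ = √M * √(∑ i ∈ t, ∫ x in S, G i x ∂μ) := Real.sqrt_mul hM _
    _ ≤ √M * ∑ i ∈ t, √(∫ x in S, G i x ∂μ) :=
      mul_le_mul_of_nonneg_left
        (sqrt_sum_le_sum_sqrt t fun i hi => setIntegral_nonneg hS (hG0 i hi)) (Real.sqrt_nonneg M)

theorem exists_sum_sqrt_integral_le_of_eq_sum (a b : ℝ) (k : ℕ) (c : ℕ → ℕ → ℝ → ℝ)
    (hc : ∀ j i, Continuous (c j i)) {ρ τ : ℝ → ℝ} (hρ : Continuous ρ) (hτ : Continuous τ)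
    (hρ0 : ∀ y, 0 ≤ ρ y) (hτ0 : ∀ y, 0 < τ y) :
    ∃ C > 0, ∀ g u : ℕ → ℝ → ℝ, (∀ i, Continuous (u i)) →
      (∀ j ≤ k, ∀ y, g j y = ∑ i ∈ range (j + 1), c j i y * u i y) →
      ∑ j ∈ range (k + 1), √(∫ y in Ioo a b, g j y ^ 2 * ρ y) ≤
        C * ∑ i ∈ range (k + 1), √(∫ y in Ioo a b, u i y ^ 2 * τ y) := by
  have hbound (j : ℕ) :
      ∃ M > 0, ∀ y ∈ Icc a b, (∑ i ∈ range (j + 1), c j i y ^ 2 / τ y) * ρ y ≤ M := by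
    have hcont : Continuous fun y => (∑ i ∈ range (j + 1), c j i y ^ 2 / τ y) * ρ y :=
      (continuous_finsetSum _ fun i _ =>
        ((hc j i).pow 2).div hτ fun y => (hτ0 y).ne').mul hρ
    obtain ⟨M, hM⟩ := isCompact_Icc.exists_bound_of_continuousOn hcont.continuousOn
    exact ⟨max M 1, by positivity,
      fun y hy => (le_abs_self _).trans ((hM y hy).trans (le_max_left _ _))⟩
  choose M hM0 hM using hbound
  refine ⟨∑ j ∈ range (k + 1), √(M j),
    sum_pos (fun j _ => Real.sqrt_pos.2 (hM0 j)) nonempty_range_add_one, fun g u hu hg => ?_⟩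
  have hint {v : ℝ → ℝ} (hv : Continuous v) : IntegrableOn v (Ioo a b) :=
    hv.integrableOn_Icc.mono_set Ioo_subset_Icc_self
  have hu0 (i : ℕ) (y : ℝ) : 0 ≤ u i y ^ 2 * τ y := mul_nonneg (sq_nonneg _) (hτ0 y).le
  rw [sum_mul]
  refine sum_le_sum fun j hj => sqrt_setIntegral_le_sqrt_mul_sum_sqrt measurableSet_Ioo _
    (hM0 j).le (hint ?_) (fun i _ => hint (((hu i).pow 2).mul hτ)) (fun i _ y _ => hu0 i y) ?_
  · rw [show g j = _ from funext (hg j (Nat.lt_succ_iff.1 (mem_range.1 hj)))]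
    exact ((continuous_finsetSum _ fun i _ => (hc j i).mul (hu i)).pow 2).mul hρ
  · intro y hy
    have hjk : j + 1 ≤ k + 1 := mem_range.1 hj
    calc g j y ^ 2 * ρ y
        ≤ (∑ i ∈ range (j + 1), c j i y ^ 2 / τ y) * ρ y *
            ∑ i ∈ range (j + 1), u i y ^ 2 * τ y := by
          rw [hg j (by omega)]
          exact sq_sum_mul_le_sum_div_mul_sum _ _ _ (hρ0 y) (hτ0 y)
      _ ≤ M j * ∑ i ∈ range (k + 1), u i y ^ 2 * τ y :=
          mul_le_mul (hM j y (Ioo_subset_Icc_self hy))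
            (sum_le_sum_of_subset_of_nonneg (range_subset_range.2 hjk) fun i _ _ => hu0 i y)
            (sum_nonneg fun i _ => hu0 i y) (hM0 j).le

/-- With `u i = f⁽ⁱ⁾`, `p = 1`, `q = w⁻¹` this expands `D^j f = (w⁻¹ d/dy)^j f`;
with `u i = D^i f`, `p = w`, `q = 1` it expands `f⁽ʲ⁾`. -/
theorem exists_eq_sum_of_hasDerivAt {p q : ℝ → ℝ} (hp : ContDiff ℝ ∞ p) (hq : ContDiff ℝ ∞ q)
    (j : ℕ) :
    ∃ a : ℕ → ℝ → ℝ, (∀ i, ContDiff ℝ ∞ (a i)) ∧ (∀ i, j < i → a i = 0) ∧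
      ∀ u g : ℕ → ℝ → ℝ, (∀ i y, HasDerivAt (u i) (p y * u (i + 1) y) y) → g 0 = u 0 →
        (∀ n y, g (n + 1) y = q y * deriv (g n) y) →
        ∀ y, g j y = ∑ i ∈ range (j + 1), a i y * u i y := by
  induction j with
  | zero =>
    refine ⟨fun i => if i = 0 then 1 else 0, fun i => ?_, fun i hi => ?_,
      fun u g _ hg0 _ y => ?_⟩
    · dsimp only; split_ifs <;> exact contDiff_const
    · simp [Nat.pos_iff_ne_zero.1 hi]
    · simp [hg0]
  | succ j ih =>
    obtain ⟨a, ha, ha0, hrep⟩ := ih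
    set shift : ℕ → ℝ → ℝ := fun i => if i = 0 then 0 else a (i - 1) with hshift
    refine ⟨fun i y => q y * (deriv (a i) y + shift i y * p y), fun i => ?_, fun i hi => ?_,
      fun u g hu hg0 hg y => ?_⟩
    · have hs : ContDiff ℝ ∞ (shift i) := by
        simp only [hshift]; split_ifs; exacts [contDiff_const, ha _]
      exact hq.mul ((contDiff_infty_iff_deriv.1 (ha i)).2.add (hs.mul hp))
    · have hs : shift i = 0 := by simp only [hshift]; rw [if_neg (by omega), ha0 _ (by omega)]
      funext y; simp [ha0 i (by omega), hs]
    · have hgj : HasDerivAt (g j)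
          (∑ i ∈ range (j + 1), (deriv (a i) y * u i y + a i y * (p y * u (i + 1) y))) y := by
        rw [show g j = _ from funext (hrep u g hu hg0 hg)]
        exact HasDerivAt.fun_sum fun i _ =>
          ((ha i).differentiable (by simp)).differentiableAt.hasDerivAt.mul (hu i y)
      have hdropTop : ∑ i ∈ range (j + 2), deriv (a i) y * u i y
          = ∑ i ∈ range (j + 1), deriv (a i) y * u i y := by
        rw [sum_range_succ, ha0 (j + 1) (by omega), deriv_zero, Pi.zero_apply, zero_mul, add_zero]
      have hreindex : ∑ i ∈ range (j + 2), shift i y * p y * u i y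
          = ∑ i ∈ range (j + 1), a i y * (p y * u (i + 1) y) := by
        rw [sum_range_succ']; simp [hshift, mul_assoc]
      rw [hg, hgj.deriv, sum_add_distrib, ← hdropTop, ← hreindex, ← sum_add_distrib, mul_sum]
      exact sum_congr rfl fun i _ => by ring

theorem contDiff_hfun : ContDiff ℝ ∞ hfun :=
  ((contDiff_const.add (contDiff_id.pow 2)).sqrt fun y => by positivity).sub contDiff_const

theorem deriv_hfun (y : ℝ) : deriv hfun y = y / √(2 + y ^ 2) := by
  have h2 : 0 < 2 + y ^ 2 := by positivity
  have h : HasDerivAt hfun ((2 : ℕ) * y ^ (2 - 1) / (2 * √(2 + y ^ 2))) y :=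
    (((hasDerivAt_pow 2 y).const_add 2).sqrt h2.ne').sub_const 2
  rw [h.deriv]
  field_simp
  norm_num

theorem abs_deriv_hfun_lt_one (y : ℝ) : |deriv hfun y| < 1 := by
  have h2 : 0 < √(2 + y ^ 2) := by positivity
  rw [deriv_hfun, abs_div, abs_of_pos h2, div_lt_one h2, ← Real.sqrt_sq_eq_abs]
  exact Real.sqrt_lt_sqrt (sq_nonneg y) (by linarith)

/-- The weight `h_±' = 1 ± h'` of `wL2`, the sign being `σ`. -/
noncomputable def weight (σ y : ℝ) : ℝ := 1 + σ * deriv hfun y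

theorem contDiff_weight (σ : ℝ) : ContDiff ℝ ∞ (weight σ) :=
  contDiff_const.add (contDiff_const.mul (contDiff_infty_iff_deriv.1 contDiff_hfun).2)

theorem weight_pos {σ : ℝ} (hσ : |σ| ≤ 1) (y : ℝ) : 0 < weight σ y := by
  have h : |σ * deriv hfun y| < 1 := by
    rw [abs_mul]
    exact (mul_le_of_le_one_left (abs_nonneg _) hσ).trans_lt (abs_deriv_hfun_lt_one y)
  unfold weight
  linarith [neg_abs_le (σ * deriv hfun y)]

theorem dop_apply (σ : ℝ) (f : ℝ → ℝ) (y : ℝ) : Dop σ f y = (weight σ y)⁻¹ * deriv f y :=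
  div_eq_inv_mul _ _

section iterate

variable {σ : ℝ}

theorem contDiff_iterate_dop (hσ : |σ| ≤ 1) (j : ℕ) {f : ℝ → ℝ} (hf : ContDiff ℝ ∞ f) :
    ContDiff ℝ ∞ ((Dop σ)^[j] f) := by
  induction j with
  | zero => exact hf
  | succ j ih =>
    rw [Function.iterate_succ_apply']
    exact (contDiff_infty_iff_deriv.1 ih).2.div (contDiff_weight σ) fun y => (weight_pos hσ y).ne'

theorem exists_iterate_dop_eq_sum (hσ : |σ| ≤ 1) (j : ℕ) :
    ∃ a : ℕ → ℝ → ℝ, (∀ i, ContDiff ℝ ∞ (a i)) ∧ ∀ f : ℝ → ℝ, ContDiff ℝ ∞ f →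
      ∀ y, (Dop σ)^[j] f y = ∑ i ∈ range (j + 1), a i y * iteratedDeriv i f y := by
  obtain ⟨a, ha, -, hrep⟩ := exists_eq_sum_of_hasDerivAt (p := fun _ => 1)
    (q := fun y => (weight σ y)⁻¹) contDiff_const
    ((contDiff_weight σ).inv fun y => (weight_pos hσ y).ne') j
  refine ⟨a, ha, fun f hf => hrep (fun i => iteratedDeriv i f) (fun n => (Dop σ)^[n] f)
    (fun i y => ?_) iteratedDeriv_zero.symm
    (fun n y => by rw [Function.iterate_succ_apply', dop_apply])⟩
  rw [one_mul, iteratedDeriv_succ]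
  exact (hf.differentiable_iteratedDeriv i (by exact_mod_cast ENat.natCast_lt_top i) y).hasDerivAt

theorem exists_iteratedDeriv_eq_sum_dop (hσ : |σ| ≤ 1) (j : ℕ) :
    ∃ a : ℕ → ℝ → ℝ, (∀ i, ContDiff ℝ ∞ (a i)) ∧ ∀ f : ℝ → ℝ, ContDiff ℝ ∞ f →
      ∀ y, iteratedDeriv j f y = ∑ i ∈ range (j + 1), a i y * (Dop σ)^[i] f y := by
  obtain ⟨a, ha, -, hrep⟩ := exists_eq_sum_of_hasDerivAt (q := fun _ => 1)
    (contDiff_weight σ) contDiff_const j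
  refine ⟨a, ha, fun f hf => hrep (fun i => (Dop σ)^[i] f) (fun n => iteratedDeriv n f)
    (fun i y => ?_) iteratedDeriv_zero (fun n y => by rw [iteratedDeriv_succ, one_mul])⟩
  rw [Function.iterate_succ_apply', dop_apply, mul_inv_cancel_left₀ (weight_pos hσ y).ne']
  exact ((contDiff_iterate_dop hσ i hf).differentiable (by simp) y).hasDerivAt

end iterate

theorem halfwave_norm_equivalence_general (R : ℝ) (k : ℕ)
    (σ : ℝ) (hσ : σ = 1 ∨ σ = -1) :
    ∃ c > (0 : ℝ), ∃ C > (0 : ℝ), ∀ f : ℝ → ℝ, ContDiff ℝ (⊤ : ℕ∞) f →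
      c * sob1 R k f ≤ ∑ j ∈ Finset.range (k + 1), wL2 R σ ((Dop σ)^[j] f) ∧
      ∑ j ∈ Finset.range (k + 1), wL2 R σ ((Dop σ)^[j] f) ≤ C * sob1 R k f := by
  have hσ' : |σ| ≤ 1 := by rcases hσ with rfl | rfl <;> norm_num
  choose A hA hDop using exists_iterate_dop_eq_sum hσ'
  choose B hB hDeriv using exists_iteratedDeriv_eq_sum_dop hσ'
  have hw := (contDiff_weight σ).continuous
  obtain ⟨C, hC, hupper⟩ := exists_sum_sqrt_integral_le_of_eq_sum (-R) R k A
    (fun j i => (hA j i).continuous) hw continuous_const (fun y => (weight_pos hσ' y).le)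
    fun _ => one_pos
  obtain ⟨C', hC', hlower⟩ := exists_sum_sqrt_integral_le_of_eq_sum (-R) R k B
    (fun j i => (hB j i).continuous) continuous_const hw (fun _ => zero_le_one) (weight_pos hσ')
  refine ⟨C'⁻¹, inv_pos.2 hC', C, hC, fun f hf => ⟨?_, ?_⟩⟩
  · rw [inv_mul_le_iff₀ hC']
    simpa only [mul_one, sob1, wL2, weight] using hlower (fun j => iteratedDeriv j f)
      (fun i => (Dop σ)^[i] f) (fun i => (contDiff_iterate_dop hσ' i hf).continuous)
      fun j _ => hDeriv j f hf
  · simpa only [mul_one, sob1, wL2, weight] using hupper (fun j => (Dop σ)^[j] f)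
      (fun i => iteratedDeriv i f)
      (fun i => hf.continuous_iteratedDeriv i (by exact_mod_cast le_top)) fun j _ => hDop j f hf

theorem halfwave_norm_equivalence (R : ℝ) (hR : 0 < R) (k : ℕ)
    (σ : ℝ) (hσ : σ = 1 ∨ σ = -1) :
    ∃ c > (0 : ℝ), ∃ C > (0 : ℝ), ∀ f : ℝ → ℝ, ContDiff ℝ (⊤ : ℕ∞) f →
      c * sob1 R k f ≤ ∑ j ∈ Finset.range (k + 1), wL2 R σ ((Dop σ)^[j] f) ∧
      ∑ j ∈ Finset.range (k + 1), wL2 R σ ((Dop σ)^[j] f) ≤ C * sob1 R k f :=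
  halfwave_norm_equivalence_general R k σ hσ
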